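/- For n ≥ 3 define the n-qubit linear cluster state Lin_n : (Fin n → Fin 2) → ℂ by Lin_n(x) = 2^{-n/2}·(-1)^{∑_{i=0}^{n-2} x_i x_{i+1}}, and similarly Lin_{n-1} on n-1 qubits. Fix m ∈ {0,1}, let H := (1/√2)·!![1,1;1,-1], Z := !![1,0;0,-1], and P_z := (√2/2)·(1 - i·Z). Define w : (Fin (n-1) → Fin 2) → ℂ by contracting the second qubit of Lin_n with the σ_y eigenvector ⟨y_m| = (⟨0| + (-1)^m·(-i)·⟨1|)/√2: w(a, y) := ∑_{b ∈ Fin 2} (1/√2)·((-1)^m·(-i))^b · Lin_n(a, b, y). Then there exists c ∈ ℂ with |c| = 1/√2 such that for all (a', y), ∑_{a ∈ Fin 2} (P_z^{2m+1}·H)_{a',a} · w(a, y) = c · Lin_{n-1}(a', y). -/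

import Mathlib

/-- The `n`-qubit linear cluster state amplitudes:
`Lin_n(x) = 2^{-n/2} · (-1)^{∑_{i=0}^{n-2} xᵢ·xᵢ₊₁}`, with `2^{-n/2} = (√2)⁻ⁿ`. -/
noncomputable def Lin (n : ℕ) (x : Fin n → Fin 2) : ℂ :=
  (((Real.sqrt 2)⁻¹ ^ n : ℝ) : ℂ) *
    (-1 : ℂ) ^ (∑ i : Fin (n - 1),
      ((x ⟨i.1, by have := i.isLt; omega⟩ : Fin 2) : ℕ) *
      ((x ⟨i.1 + 1, by have := i.isLt; omega⟩ : Fin 2) : ℕ))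

/-- The Hadamard gate `H = (1/√2)·!![1,1;1,-1]`. -/
noncomputable def Hgate : Matrix (Fin 2) (Fin 2) ℂ :=
  ((1 / Real.sqrt 2 : ℝ) : ℂ) • !![1, 1; 1, -1]

/-- The Pauli `Z` gate. -/
def Zgate : Matrix (Fin 2) (Fin 2) ℂ := !![1, 0; 0, -1]

/-- The half rotation around the Z-axis, `P_z = (√2/2)·(1 - i·Z)`. -/
noncomputable def Pz : Matrix (Fin 2) (Fin 2) ℂ :=
  ((Real.sqrt 2 / 2 : ℝ) : ℂ) • ((1 : Matrix (Fin 2) (Fin 2) ℂ) - Complex.I • Zgate)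

/-- Insert a bit `b` as the second qubit of an `(n+2)`-qubit basis string,
producing an `(n+3)`-qubit basis string `(z₀, b, z₁, …, z_{n+1})`. -/
def insSnd (n : ℕ) (b : Fin 2) (z : Fin (n + 2) → Fin 2) : Fin (n + 3) → Fin 2 :=
  fun i =>
    if i.1 = 0 then z ⟨0, by omega⟩
    else if i.1 = 1 then b
    else z ⟨i.1 - 1, by have := i.isLt; omega⟩

/-- The (subnormalized) post-measurement state obtained by contracting the second
qubit of `Lin_{n+3}` with the `σ_y` eigenvector `⟨y_m| = (⟨0| + (-1)^m·(-i)·⟨1|)/√2`: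
`w(a,y) = ∑_b (1/√2)·((-1)^m·(-i))^b·Lin_{n+3}(a, b, y)`. -/
noncomputable def wY (n m : ℕ) (z : Fin (n + 2) → Fin 2) : ℂ :=
  ∑ b : Fin 2,
    (((Real.sqrt 2)⁻¹ : ℝ) : ℂ) * ((-1 : ℂ) ^ m * (-Complex.I)) ^ (b : ℕ) *
      Lin (n + 3) (insSnd n b z)

/-!
Prepending a qubit `a` to a chain `x` multiplies its cluster amplitude by `(√2)⁻¹·(-1)^{a·x₀}`.
Hence, with `ω = (-1)^m·(-i)` (so `ω² = -1`), contracting the second qubit gives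
`w(a, y) = (√2)⁻³ · Lin_{n+1}(y) · (1 + ω·(-1)^{a+y₀})`.
Since `P_z = ζ·diag(1, i)` with `ζ = (1 - i)/√2` of modulus one and `i^{2m+1} = -ω`, the
correction is `ζ^{2m+1}·diag(1, -ω)·H`, and `diag(1, -ω)·H` sends `a ↦ 1 + ω·(-1)^{a+y₀}`
to `a' ↦ √2·(-1)^{a'·y₀}`. This gives the claim with `c = ζ^{2m+1}/√2`.
-/

open Complex

theorem Lin_succ (n : ℕ) (x : Fin (n + 1) → Fin 2) :
    Lin (n + 1) x = (((Real.sqrt 2)⁻¹ ^ (n + 1) : ℝ) : ℂ) *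
      (-1) ^ ∑ i : Fin n, (x i.castSucc : ℕ) * (x i.succ : ℕ) :=
  rfl

theorem Lin_cons (n : ℕ) (a : Fin 2) (x : Fin (n + 1) → Fin 2) :
    Lin (n + 2) (Fin.cons a x) =
      ((Real.sqrt 2)⁻¹ : ℂ) * (-1) ^ ((a : ℕ) * (x 0 : ℕ)) * Lin (n + 1) x := by
  rw [Lin_succ, Lin_succ, Fin.sum_univ_succ]
  simp only [← Fin.succ_castSucc, Fin.cons_succ, Fin.castSucc_zero, Fin.cons_zero, pow_add,
    pow_succ]
  push_cast
  ring

theorem update_zero_eq_cons_tail {n : ℕ} {α : Type*} (x : Fin (n + 1) → α) (a : α) :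
    Function.update x 0 a = Fin.cons a (Fin.tail x) := by
  rw [← Fin.update_cons_zero (x 0), Fin.cons_self_tail]

theorem insSnd_eq_cons (n : ℕ) (b : Fin 2) (z : Fin (n + 2) → Fin 2) :
    insSnd n b z = Fin.cons (z 0) (Fin.cons b (Fin.tail z)) := by
  funext ⟨i, _⟩
  rcases i with _ | _ | i <;> rfl

theorem wY_update_zero (n m : ℕ) (x : Fin (n + 2) → Fin 2) (a : Fin 2) :
    wY n m (Function.update x 0 a) =
      ((Real.sqrt 2)⁻¹ : ℂ) ^ 3 * Lin (n + 1) (Fin.tail x) *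
        ∑ b : Fin 2, ((-1) ^ m * -I) ^ (b : ℕ) *
          ((-1) ^ ((a : ℕ) * (b : ℕ)) * (-1) ^ ((b : ℕ) * (x 1 : ℕ))) := by
  simp only [wY, update_zero_eq_cons_tail, insSnd_eq_cons, Fin.cons_zero, Fin.tail_cons, Lin_cons,
    Finset.mul_sum]
  refine Finset.sum_congr rfl fun b _ => ?_
  simp only [Fin.tail, Fin.succ_zero_eq_one]
  push_cast
  ring

theorem Pz_pow (k : ℕ) :
    Pz ^ k = (((Real.sqrt 2 / 2 : ℝ) : ℂ) * (1 - I)) ^ k • Matrix.diagonal ![1, I ^ k] := by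
  have hPz : Pz = (((Real.sqrt 2 / 2 : ℝ) : ℂ) * (1 - I)) • Matrix.diagonal ![1, I] := by
    ext i j
    fin_cases i <;> fin_cases j <;> simp [Pz, Zgate]
    linear_combination ((Real.sqrt 2 : ℂ) / 2) * I_sq
  rw [hPz, smul_pow, Matrix.diagonal_pow]
  congr 2
  ext i
  fin_cases i <;> simp

theorem Pz_pow_two_mul_add_one (m : ℕ) :
    Pz ^ (2 * m + 1) = (((Real.sqrt 2 / 2 : ℝ) : ℂ) * (1 - I)) ^ (2 * m + 1) •
      Matrix.diagonal ![1, -((-1) ^ m * -I)] := by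
  have hI : I ^ (2 * m + 1) = -((-1) ^ m * -I) := by
    rw [pow_succ, pow_mul, I_sq]
    ring
  rw [Pz_pow, hI]

theorem norm_sqrt_two_div_two_mul_one_sub_I : ‖((Real.sqrt 2 / 2 : ℝ) : ℂ) * (1 - I)‖ = 1 := by
  have h : ‖(1 - I : ℂ)‖ = Real.sqrt 2 := by
    rw [norm_eq_sqrt_sq_add_sq]
    norm_num
  rw [norm_mul, Complex.norm_real, Real.norm_of_nonneg (by positivity), h, div_mul_eq_mul_div,
    Real.mul_self_sqrt zero_le_two, div_self two_ne_zero]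

theorem diagonal_mul_Hgate_contract (ω : ℂ) (hω : ω ^ 2 = -1) (x y : Fin 2) :
    ∑ a : Fin 2, (Matrix.diagonal ![1, -ω] * Hgate) x a *
        ∑ b : Fin 2, ω ^ (b : ℕ) * ((-1) ^ ((a : ℕ) * (b : ℕ)) * (-1) ^ ((b : ℕ) * (y : ℕ))) =
      Real.sqrt 2 * (-1) ^ ((x : ℕ) * (y : ℕ)) := by
  have hs : ((Real.sqrt 2 : ℝ) : ℂ) ^ 2 = 2 := by norm_cast; simp
  fin_cases x <;> fin_cases y <;> simp [Fin.sum_univ_two, Matrix.mul_apply, Hgate] <;> field_simp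
  · linear_combination -hs
  · linear_combination -hs
  · linear_combination -hs - 2 * hω
  · linear_combination hs + 2 * hω

theorem sum_diagonal_mul_Hgate_mul_wY (n m : ℕ) (x : Fin (n + 2) → Fin 2) :
    ∑ a : Fin 2, (Matrix.diagonal ![1, -((-1) ^ m * -I)] * Hgate) (x 0) a *
        wY n m (Function.update x 0 a) =
      ((Real.sqrt 2)⁻¹ : ℂ) * Lin (n + 2) x := by
  have hω : ((-1) ^ m * -I) ^ 2 = -1 := by
    rw [mul_pow, pow_right_comm, neg_one_sq, one_pow, neg_sq, I_sq, one_mul]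
  have hLin : Lin (n + 2) x =
      ((Real.sqrt 2)⁻¹ : ℂ) * (-1) ^ ((x 0 : ℕ) * (x 1 : ℕ)) * Lin (n + 1) (Fin.tail x) := by
    simpa [Fin.tail] using Lin_cons n (x 0) (Fin.tail x)
  simp only [wY_update_zero, mul_left_comm _ (((Real.sqrt 2)⁻¹ : ℂ) ^ 3 * _), ← Finset.mul_sum,
    diagonal_mul_Hgate_contract _ hω, hLin]
  field_simp

theorem stmt_14_general (n m : ℕ) :
    ∃ c : ℂ, ‖c‖ = (Real.sqrt 2)⁻¹ ∧
      ∀ x' : Fin (n + 2) → Fin 2,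
        ∑ a : Fin 2, (Pz ^ (2 * m + 1) * Hgate) (x' 0) a * wY n m (Function.update x' 0 a)
          = c * Lin (n + 2) x' := by
  refine ⟨((Real.sqrt 2)⁻¹ : ℂ) * (((Real.sqrt 2 / 2 : ℝ) : ℂ) * (1 - I)) ^ (2 * m + 1), ?_,
    fun x => ?_⟩
  · rw [norm_mul, norm_pow, norm_sqrt_two_div_two_mul_one_sub_I, one_pow, mul_one, norm_inv,
      Complex.norm_real, Real.norm_of_nonneg (Real.sqrt_nonneg 2)]
  simp only [Pz_pow_two_mul_add_one, smul_mul_assoc, Matrix.smul_apply, smul_eq_mul, mul_assoc,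
    ← Finset.mul_sum, sum_diagonal_mul_Hgate_mul_wY]
  ring

/-- for `n + 3 ≥ 3` qubits: measuring the second qubit of a linear
cluster chain in the `σ_y` basis with outcome `m ∈ {0,1}` and applying the local
correction `P_z^{2m+1}·H` to the first qubit yields, up to a global phase `c` of
modulus `1/√2`, the shorter linear cluster state:
`∑_a (P_z^{2m+1}·H)_{a',a} · w(a, y) = c·Lin_{n+2}(a', y)` for all `(a', y)`. -/
theorem stmt_14 (n m : ℕ) (hm : m = 0 ∨ m = 1) :
    ∃ c : ℂ, ‖c‖ = (Real.sqrt 2)⁻¹ ∧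
      ∀ x' : Fin (n + 2) → Fin 2,
        ∑ a : Fin 2, (Pz ^ (2 * m + 1) * Hgate) (x' 0) a * wY n m (Function.update x' 0 a)
          = c * Lin (n + 2) x' :=
  stmt_14_general n m
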